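/- As formal power series in t, (1+t)^α (1−t)^β = ∑_{m=0}^∞ 2^m · P_m^{(α−m, β−m)}(0) · t^m, where P_m^{(α,β)} denotes the Jacobi polynomial. -/
import Mathlib


open Finset PowerSeries

/-- Falling factorial `r(r-1)⋯(r-j+1)`. -/
noncomputable def fallFac (r : ℂ) (j : ℕ) : ℂ := (descPochhammer ℂ j).eval r

/-- Generalized binomial coefficient `C(a,k) = a(a-1)⋯(a-k+1)/k!`. -/
noncomputable def gchoose (a : ℂ) (k : ℕ) : ℂ := fallFac a k / (k.factorial : ℂ)

/-- Jacobi polynomial. -/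
noncomputable def Jacobi (α β : ℂ) (m : ℕ) (z : ℂ) : ℂ :=
  ∑ j ∈ range (m + 1),
    gchoose ((m : ℂ) + α) (m - j) * gchoose ((m : ℂ) + β) j *
      ((z - 1) / 2) ^ j * ((z + 1) / 2) ^ (m - j)

/-- The binomial series `(1+t)^α` as a formal power series. -/
noncomputable def onePlusPow (α : ℂ) : PowerSeries ℂ := PowerSeries.mk fun u => gchoose α u

/-- The binomial series `(1-t)^α` as a formal power series. -/
noncomputable def oneSubPow (α : ℂ) : PowerSeries ℂ :=
  PowerSeries.mk fun u => (-1 : ℂ) ^ u * gchoose α u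

/-- `(1+t)^α (1−t)^β = ∑_m 2^m P_m^{(α−m, β−m)}(0) t^m` as formal power series. -/
theorem jacobi_generating_function (α β : ℂ) :
    onePlusPow α * oneSubPow β =
      PowerSeries.mk fun m => (2 : ℂ) ^ m * Jacobi (α - m) (β - m) m 0 := by
  ext n
  rw [PowerSeries.coeff_mk, PowerSeries.coeff_mul,
    Finset.Nat.sum_antidiagonal_eq_sum_range_succ_mk]
  simp only [onePlusPow, oneSubPow, coeff_mk, Jacobi]
  rw [Finset.mul_sum, ← Finset.sum_range_reflect]
  apply Finset.sum_congr rfl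
  intro j hj
  have hj' : j ≤ n := Nat.lt_succ_iff.mp (Finset.mem_range.mp hj)
  simp only [Nat.succ_sub_one]
  rw [Nat.sub_sub_self hj']
  have h1 : (n : ℂ) + (α - n) = α := by ring
  have h2 : (n : ℂ) + (β - n) = β := by ring
  rw [h1, h2]
  have hpow : (2 : ℂ) ^ n = (2 : ℂ) ^ (n - j) * 2 ^ j := by
    rw [← pow_add, Nat.sub_add_cancel hj']
  rw [hpow]
  have h3 : ((0 : ℂ) - 1) / 2 = -(2⁻¹) := by norm_num
  have h4 : ((0 : ℂ) + 1) / 2 = 2⁻¹ := by norm_num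
  rw [h3, h4]
  have e3 : ((-2⁻¹ : ℂ)) ^ j = (-1) ^ j * 2⁻¹ ^ j := by rw [neg_pow]
  have e1 : (2 : ℂ) ^ (n - j) * 2⁻¹ ^ (n - j) = 1 := by rw [← mul_pow]; norm_num
  have e2 : (2 : ℂ) ^ j * 2⁻¹ ^ j = 1 := by rw [← mul_pow]; norm_num
  calc gchoose α (n - j) * ((-1) ^ j * gchoose β j)
      = (2 ^ (n - j) * 2⁻¹ ^ (n - j)) *
          ((2 ^ j * 2⁻¹ ^ j) * (gchoose α (n - j) * ((-1) ^ j * gchoose β j))) := by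
        rw [e1, e2]; ring
    _ = _ := by rw [e3]; ring
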